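/- Let ℓ₀, …, ℓ_n be n+1 nonzero linear functionals on ℂⁿ. Then the alternating sum ∑_{i=0}^{n} (−1)^i ω_{ℓ₀} ∧ … ∧ ω̂_{ℓᵢ} ∧ … ∧ ω_{ℓ_n} = 0, where ω_ℓ = (1/(2πi)) dℓ/ℓ and the hat denotes omission. -/

import Mathlib

/-- The coefficient of the meromorphic `n`-form `ω_{ℓ₁} ∧ ⋯ ∧ ω_{ℓ_n}` on `ℂⁿ`
(with respect to `dz₁ ∧ ⋯ ∧ dz_n`), where `ω_ℓ = (1/(2πi)) dℓ/ℓ`. -/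
noncomputable def omegaWedgeCoeff (n : ℕ) (L : Fin n → ((Fin n → ℂ) →ₗ[ℂ] ℂ))
    (z : Fin n → ℂ) : ℂ :=
  (1 / (2 * (Real.pi : ℂ) * Complex.I)) ^ n *
    (Matrix.of fun i j => L i (Pi.single j 1)).det / ∏ i, L i z

private lemma aux_div (D a b e : ℂ) (ha : a ≠ 0) (hb : b ≠ 0) :
    e * D / b = a * D * (e / (a * b)) := by
  field_simp

theorem stmt_6 (n : ℕ) (L : Fin (n + 1) → ((Fin n → ℂ) →ₗ[ℂ] ℂ)) (hL : ∀ i, L i ≠ 0)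
    (z : Fin n → ℂ) (hz : ∀ i, L i z ≠ 0) :
    ∑ i : Fin (n + 1), (-1 : ℂ) ^ (i : ℕ) *
      omegaWedgeCoeff n (fun j => L (i.succAbove j)) z = 0 := by
  set c : ℂ := 1 / (2 * (Real.pi : ℂ) * Complex.I) with hc
  have hzexp : ∀ i : Fin (n + 1), L i z = ∑ k, z k * L i (Pi.single k 1) := by
    intro i
    have hzsum : z = ∑ k, Pi.single k (z k) := (Finset.univ_sum_single z).symm
    conv_lhs => rw [hzsum]
    rw [map_sum]
    refine Finset.sum_congr rfl fun k _ => ?_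
    have h1 : Pi.single k (z k) = z k • (Pi.single k 1 : Fin n → ℂ) := by
      funext j
      by_cases h : j = k <;> simp [Pi.single_apply, h]
    rw [h1, map_smul, smul_eq_mul]
  set A : Matrix (Fin (n + 1)) (Fin (n + 1)) ℂ := Matrix.of fun i j =>
    Fin.cases (L i z) (fun k => L i (Pi.single k 1)) j with hAdef
  have hA : A.det = 0 := by
    rw [← Matrix.exists_mulVec_eq_zero_iff]
    refine ⟨fun j => Fin.cases (-1) (fun k => z k) j, ?_, ?_⟩
    · intro h
      have := congrFun h 0
      simp at this
    · funext i
      simp only [Matrix.mulVec, dotProduct, Fin.sum_univ_succ, hAdef, Matrix.of_apply,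
        Fin.cases_zero, Fin.cases_succ, Pi.zero_apply]
      rw [hzexp i, mul_neg_one, neg_add_eq_zero]
      exact Finset.sum_congr rfl fun k _ => mul_comm _ _
  have hexp : A.det = ∑ i : Fin (n + 1), (-1 : ℂ) ^ (i : ℕ) * (L i z) *
      (Matrix.of fun k j => L (i.succAbove k) (Pi.single j 1)).det := by
    rw [Matrix.det_succ_column_zero]
    refine Finset.sum_congr rfl fun i _ => ?_
    have h0 : A i 0 = L i z := by simp [hAdef]
    have hsub : A.submatrix i.succAbove Fin.succ
        = Matrix.of fun k j => L (i.succAbove k) (Pi.single j 1) := by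
      ext k j
      simp [hAdef, Matrix.submatrix_apply]
    rw [h0, hsub]
  have key : ∀ i : Fin (n + 1), omegaWedgeCoeff n (fun j => L (i.succAbove j)) z
      = (L i z) * (Matrix.of fun k j => L (i.succAbove k) (Pi.single j 1)).det *
        (c ^ n / ∏ j, L j z) := by
    intro i
    have hprod : (∏ j, L j z) = L i z * ∏ j, L (i.succAbove j) z :=
      Fin.prod_univ_succAbove (fun j => L j z) i
    have h1 : (∏ j : Fin n, L (i.succAbove j) z) ≠ 0 :=
      Finset.prod_ne_zero_iff.mpr fun j _ => hz _
    unfold omegaWedgeCoeff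
    rw [hprod, ← hc]
    exact aux_div _ _ _ _ (hz i) h1
  calc ∑ i : Fin (n + 1), (-1 : ℂ) ^ (i : ℕ) *
        omegaWedgeCoeff n (fun j => L (i.succAbove j)) z
      = (∑ i : Fin (n + 1), (-1 : ℂ) ^ (i : ℕ) * (L i z) *
          (Matrix.of fun k j => L (i.succAbove k) (Pi.single j 1)).det) *
        (c ^ n / ∏ j, L j z) := by
        rw [Finset.sum_mul]
        exact Finset.sum_congr rfl fun i _ => by rw [key i]; ring
    _ = 0 := by rw [← hexp, hA, zero_mul]
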